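/- Let A be a proper assembly (possibly with unoriented or semi-oriented points) such that every scaffold participates in at most two assembly points of A, and whenever a scaffold participates in two points, those two points are non-conflicting or semi-conflicting (i.e., they do not use the same fixed extremity of the shared scaffold when both orientations are forced). Then A admits a non-conflicting realization: there is an assignment of an orientation (Bool) to every scaffold, consistent with all orientations already specified in A, such that the resulting set of oriented assembly points uses each scaffold extremity at most once. -/

import Mathlib

/-- An assembly point: two scaffolds with partial orientation data
(`none` = unoriented, `some b` = oriented, `true` = forward). -/
structure APoint (S : Type) where
  s1 : S
  s2 : S
  o1 : Option Bool
  o2 : Option Bool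
deriving DecidableEq

/-- A global orientation `σ` extends (is consistent with) the partial data of `p`. -/
def APoint.extends' {S : Type} (σ : S → Bool) (p : APoint S) : Prop :=
  (∀ b, p.o1 = some b → σ p.s1 = b) ∧ (∀ b, p.o2 = some b → σ p.s2 = b)

/-- The extremity of its left scaffold used by a point realized via `σ`
(head `(s, true)` if `s` is forward). -/
def APoint.usedL {S : Type} (σ : S → Bool) (p : APoint S) : S × Bool := (p.s1, σ p.s1)

/-- The extremity of its right scaffold used by a point realized via `σ`
(tail `(s, false)` if `s` is forward). -/
def APoint.usedR {S : Type} (σ : S → Bool) (p : APoint S) : S × Bool := (p.s2, !σ p.s2)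

/-- Two realized points use disjoint sets of extremities (are non-conflicting). -/
def APoint.disj {S : Type} (τ τ' : S → Bool) (p q : APoint S) : Prop :=
  p.usedL τ ≠ q.usedL τ' ∧ p.usedL τ ≠ q.usedR τ' ∧
  p.usedR τ ≠ q.usedL τ' ∧ p.usedR τ ≠ q.usedR τ'

/-- `σ` is a non-conflicting realization of the assembly `A`: it extends the partial
orientation data of every point, and every scaffold extremity is used at most once. -/
def NCR {S : Type} (A : Finset (APoint S)) (σ : S → Bool) : Prop :=
  (∀ p ∈ A, p.extends' σ) ∧
  (∀ p ∈ A, p.usedL σ ≠ p.usedR σ) ∧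
  (∀ p ∈ A, ∀ q ∈ A, p ≠ q → APoint.disj σ σ p q)

/-- Orientation `b` of scaffold `s` is allowed by the partial data of point `p`. -/
def allowedOri {S : Type} (p : APoint S) (s : S) (b : Bool) : Prop :=
  (p.s1 = s → ∀ c, p.o1 = some c → b = c) ∧ (p.s2 = s → ∀ c, p.o2 = some c → b = c)

/-- The extremity side of scaffold `s` used by point `p` when `s` has orientation `b`. -/
def extOf {S : Type} [DecidableEq S] (p : APoint S) (s : S) (b : Bool) : Bool :=
  if p.s1 = s then b else !b

/-! Orient every scaffold by an orientation allowed by all points touching it: there are at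
most two, and for two of them the separability hypothesis supplies a common one. Any such
realization is non-conflicting, since a scaffold used on opposite sides of two points contributes
opposite extremities to them, while two points using a scaffold on the same side always use the
same extremity of it, which separability excludes. -/

theorem Finset.eq_or_eq_of_card_le_two {α : Type*} {t : Finset α} (ht : t.card ≤ 2)
    {p q r : α} (hp : p ∈ t) (hq : q ∈ t) (hr : r ∈ t) (hpq : p ≠ q) : r = p ∨ r = q := by
  by_contra! h
  exact (Finset.two_lt_card.2 ⟨p, hp, q, hq, r, hr, hpq, h.1.symm, h.2.symm⟩).not_ge ht

namespace APoint

variable {S : Type}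

theorem exists_allowedOri (p : APoint S) (s : S) (hp : p.s1 ≠ p.s2) :
    ∃ b, allowedOri p s b := by
  by_cases h1 : p.s1 = s
  · exact ⟨p.o1.getD true, fun _ c hc => by simp [hc], fun h2 => absurd (h1.trans h2.symm) hp⟩
  · exact ⟨p.o2.getD true, fun h => absurd h h1, fun _ c hc => by simp [hc]⟩

theorem extends'_of_allowedOri {σ : S → Bool} {p : APoint S}
    (h1 : allowedOri p p.s1 (σ p.s1)) (h2 : allowedOri p p.s2 (σ p.s2)) : p.extends' σ :=
  ⟨h1.1 rfl, h2.2 rfl⟩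

theorem usedL_ne_usedR {σ : S → Bool} {p : APoint S} (hp : p.s1 ≠ p.s2) :
    p.usedL σ ≠ p.usedR σ :=
  fun h => hp (congrArg Prod.fst h)

theorem disj_of_s1_ne_of_s2_ne (σ : S → Bool) {p q : APoint S} (h1 : p.s1 ≠ q.s1)
    (h2 : p.s2 ≠ q.s2) : disj σ σ p q := by
  refine ⟨fun h => h1 (congrArg Prod.fst h), fun h => ?_, fun h => ?_,
    fun h => h2 (congrArg Prod.fst h)⟩ <;>
  · simp only [usedL, usedR, Prod.mk.injEq] at h
    rw [h.1] at h
    simp at h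

end APoint

section Assembly

variable {S : Type} [DecidableEq S]

/-- Every two points sharing a scaffold are non-conflicting or semi-conflicting. -/
def SeparableAtSharedScaffolds (A : Finset (APoint S)) : Prop :=
  ∀ p ∈ A, ∀ q ∈ A, p ≠ q → ∀ s : S,
    (p.s1 = s ∨ p.s2 = s) → (q.s1 = s ∨ q.s2 = s) →
    ∃ b : Bool, allowedOri p s b ∧ allowedOri q s b ∧ extOf p s b ≠ extOf q s b

variable {A : Finset (APoint S)}

theorem SeparableAtSharedScaffolds.s1_ne_and_s2_ne (hA : SeparableAtSharedScaffolds A)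
    (hss : ∀ p ∈ A, p.s1 ≠ p.s2) {p q : APoint S} (hp : p ∈ A) (hq : q ∈ A) (hpq : p ≠ q) :
    p.s1 ≠ q.s1 ∧ p.s2 ≠ q.s2 := by
  constructor
  · intro h
    obtain ⟨b, -, -, hb⟩ := hA p hp q hq hpq q.s1 (Or.inl h) (Or.inl rfl)
    exact hb (by simp [extOf, h])
  · intro h
    obtain ⟨b, -, -, hb⟩ := hA p hp q hq hpq q.s2 (Or.inr h) (Or.inr rfl)
    have hp1 : p.s1 ≠ q.s2 := h ▸ hss p hp
    exact hb (by simp [extOf, hp1, hss q hq])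

theorem SeparableAtSharedScaffolds.exists_allowedOri (hA : SeparableAtSharedScaffolds A)
    (hss : ∀ p ∈ A, p.s1 ≠ p.s2)
    (hdeg : ∀ s : S, (A.filter (fun p => p.s1 = s ∨ p.s2 = s)).card ≤ 2)
    (s : S) : ∃ b, ∀ p ∈ A, (p.s1 = s ∨ p.s2 = s) → allowedOri p s b := by
  set T := A.filter (fun p => p.s1 = s ∨ p.s2 = s)
  have memT {r : APoint S} (hr : r ∈ A) (hrs : r.s1 = s ∨ r.s2 = s) : r ∈ T :=
    Finset.mem_filter.2 ⟨hr, hrs⟩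
  rcases T.eq_empty_or_nonempty with hT | ⟨p, hpT⟩
  · exact ⟨true, fun r hr hrs => absurd (memT hr hrs) (hT ▸ Finset.notMem_empty r)⟩
  obtain ⟨hp, hps⟩ := Finset.mem_filter.1 hpT
  by_cases hpair : ∃ q ∈ T, q ≠ p
  · obtain ⟨q, hqT, hqp⟩ := hpair
    obtain ⟨hq, hqs⟩ := Finset.mem_filter.1 hqT
    obtain ⟨b, hbp, hbq, -⟩ := hA p hp q hq hqp.symm s hps hqs
    refine ⟨b, fun r hr hrs => ?_⟩
    rcases Finset.eq_or_eq_of_card_le_two (hdeg s) hpT hqT (memT hr hrs) hqp.symm with rfl | rfl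
    exacts [hbp, hbq]
  · push Not at hpair
    obtain ⟨b, hb⟩ := APoint.exists_allowedOri p s (hss p hp)
    exact ⟨b, fun r hr hrs => hpair r (memT hr hrs) ▸ hb⟩

end Assembly

theorem exists_nonconflicting_realization_general {S : Type} [DecidableEq S]
    (A : Finset (APoint S))
    (hss : ∀ p ∈ A, p.s1 ≠ p.s2)
    (hdeg : ∀ s : S, (A.filter (fun p => p.s1 = s ∨ p.s2 = s)).card ≤ 2)
    (hpair : ∀ p ∈ A, ∀ q ∈ A, p ≠ q → ∀ s : S,
      (p.s1 = s ∨ p.s2 = s) → (q.s1 = s ∨ q.s2 = s) →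
      ∃ b : Bool, allowedOri p s b ∧ allowedOri q s b ∧ extOf p s b ≠ extOf q s b) :
    ∃ σ : S → Bool, NCR A σ := by
  have hA : SeparableAtSharedScaffolds A := hpair
  choose σ hσ using hA.exists_allowedOri hss hdeg
  refine ⟨σ, fun p hp => ?_, fun p hp => APoint.usedL_ne_usedR (hss p hp),
    fun p hp q hq hpq => ?_⟩
  · exact APoint.extends'_of_allowedOri (hσ _ p hp (Or.inl rfl)) (hσ _ p hp (Or.inr rfl))
  · obtain ⟨h1, h2⟩ := hA.s1_ne_and_s2_ne hss hp hq hpq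
    exact APoint.disj_of_s1_ne_of_s2_ne σ h1 h2

/-- a proper assembly in which every scaffold participates in at most two
points, and every two points sharing a scaffold are non-conflicting or semi-conflicting
(some common allowed orientation of the shared scaffold makes them use distinct
extremities of it), admits a non-conflicting realization. -/
theorem exists_nonconflicting_realization {S : Type} [Fintype S] [DecidableEq S]
    (A : Finset (APoint S))
    (hss : ∀ p ∈ A, p.s1 ≠ p.s2)
    (hdeg : ∀ s : S, (A.filter (fun p => p.s1 = s ∨ p.s2 = s)).card ≤ 2)
    (hpair : ∀ p ∈ A, ∀ q ∈ A, p ≠ q → ∀ s : S,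
      (p.s1 = s ∨ p.s2 = s) → (q.s1 = s ∨ q.s2 = s) →
      ∃ b : Bool, allowedOri p s b ∧ allowedOri q s b ∧ extOf p s b ≠ extOf q s b) :
    ∃ σ : S → Bool, NCR A σ :=
  exists_nonconflicting_realization_general A hss hdeg hpair
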